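/- arXiv:2105.00767 — 3 statements merged into one kernel-verified Lean document; each statement's English description precedes it below -/
import Mathlib

section
/- Suppose g : [0,1]^{N×M} → [0,1]^{N×M} is a ‖·‖_∞-contraction with constant C₁ < 1 and fixed point s̄, η > 0, and w(s)^i(j) = σ(s^i, j)·g(s)^i(j) + (1 − σ(s^i, j))·s^i(j). Then for any stepsize sequence γ_n ∈ [0,1], the deterministic mean iteration s_{n+1} = s_n + γ_n·(w(s_n) − s_n) with s_0 ∈ [0,1]^{N×M} satisfies ‖s_{n+1} − s̄‖_∞ ≤ (1 − γ_n·(η/M)(1 − C₁))·‖s_n − s̄‖_∞ for every n. -/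
open Finset

/-- The Hedge stationary policy. -/
noncomputable def hedge (β η : ℝ) {M : ℕ} (s : Fin M → ℝ) (j : Fin M) : ℝ :=
  (1 - η) * Real.exp (β * s j) / (∑ k, Real.exp (β * s k)) + η / M

/-- Expected one-step update map
`w(s)^i(j) = σ(s^i,j)·g(s)^i(j) + (1 − σ(s^i,j))·s^i(j)`. -/
noncomputable def expUpdate {N M : ℕ} (β η : ℝ)
    (g : (Fin N → Fin M → ℝ) → Fin N → Fin M → ℝ)
    (s : Fin N → Fin M → ℝ) : Fin N → Fin M → ℝ :=
  fun i j => hedge β η (s i) j * g s i j + (1 - hedge β η (s i) j) * s i j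

lemma hedge_bounds {M : ℕ} (hM : 1 ≤ M) {β η : ℝ} (hη : η ∈ Set.Icc (0:ℝ) 1)
    (s : Fin M → ℝ) (j : Fin M) :
    η / M ≤ hedge β η s j ∧ hedge β η s j ≤ 1 := by
  obtain ⟨hη0, hη1⟩ := hη
  haveI : Nonempty (Fin M) := ⟨⟨0, hM⟩⟩
  have hsum : 0 < ∑ k, Real.exp (β * s k) :=
    Finset.sum_pos (fun k _ => Real.exp_pos _) Finset.univ_nonempty
  have hM1 : (1 : ℝ) ≤ (M : ℝ) := by exact_mod_cast hM
  constructor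
  · have h0 : 0 ≤ (1 - η) * Real.exp (β * s j) / (∑ k, Real.exp (β * s k)) :=
      div_nonneg (mul_nonneg (by linarith) (Real.exp_pos _).le) hsum.le
    unfold hedge; linarith
  · have h1 : Real.exp (β * s j) ≤ ∑ k, Real.exp (β * s k) :=
      Finset.single_le_sum (f := fun k => Real.exp (β * s k))
        (fun k _ => (Real.exp_pos _).le) (Finset.mem_univ j)
    have h2 : (1 - η) * Real.exp (β * s j) / (∑ k, Real.exp (β * s k)) ≤ 1 - η := by
      rw [div_le_iff₀ hsum]
      nlinarith [Real.exp_pos (β * s j)]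
    have h3 : η / M ≤ η := by
      apply div_le_self hη0 hM1
    unfold hedge; linarith

set_option maxHeartbeats 1000000 in
/-- the deterministic mean iteration `s_{n+1} = s_n + γ_n (w(s_n) − s_n)`
contracts towards the fixed point `s̄` at each step:
`‖s_{n+1} − s̄‖_∞ ≤ (1 − γ_n (η/M)(1 − C₁)) ‖s_n − s̄‖_∞`. -/
theorem mean_iteration_contraction {N M : ℕ} (hN : 1 ≤ N) (hM : 1 ≤ M)
    (β η : ℝ) (hβ : 0 < β) (hη : η ∈ Set.Icc (0 : ℝ) 1) (hη0 : 0 < η)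
    (g : (Fin N → Fin M → ℝ) → Fin N → Fin M → ℝ)
    (hg_box : ∀ s : Fin N → Fin M → ℝ, (∀ i j, s i j ∈ Set.Icc (0 : ℝ) 1) →
      ∀ i j, g s i j ∈ Set.Icc (0 : ℝ) 1)
    (C₁ : ℝ) (hC₁0 : 0 ≤ C₁) (hC₁ : C₁ < 1)
    (hg_contr : ∀ s s' : Fin N → Fin M → ℝ,
      (∀ i j, s i j ∈ Set.Icc (0 : ℝ) 1) → (∀ i j, s' i j ∈ Set.Icc (0 : ℝ) 1) →
      ‖g s - g s'‖ ≤ C₁ * ‖s - s'‖)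
    (sbar : Fin N → Fin M → ℝ)
    (hsbar_box : ∀ i j, sbar i j ∈ Set.Icc (0 : ℝ) 1)
    (hsbar_fix : g sbar = sbar)
    (γ : ℕ → ℝ) (hγ : ∀ n, γ n ∈ Set.Icc (0 : ℝ) 1)
    (s : ℕ → Fin N → Fin M → ℝ)
    (hs0 : ∀ i j, s 0 i j ∈ Set.Icc (0 : ℝ) 1)
    (hrec : ∀ n, s (n + 1) = fun i j =>
      s n i j + γ n * (expUpdate β η g (s n) i j - s n i j)) :
    ∀ n, ‖s (n + 1) - sbar‖ ≤ (1 - γ n * (η / M) * (1 - C₁)) * ‖s n - sbar‖ := by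
  have hη' := hη
  obtain ⟨hηa, hηb⟩ := hη'
  have hM1 : (1 : ℝ) ≤ (M : ℝ) := by exact_mod_cast hM
  have hηM0 : 0 ≤ η / M := div_nonneg hηa (by linarith)
  have hηM1 : η / M ≤ 1 := by
    calc η / M ≤ η := div_le_self hηa hM1
    _ ≤ 1 := hηb
  -- box invariance
  have hbox : ∀ n, ∀ i j, s n i j ∈ Set.Icc (0 : ℝ) 1 := by
    intro n
    induction n with
    | zero => exact hs0
    | succ n ih =>
      intro i j
      rw [hrec n]
      obtain ⟨hγ0, hγ1⟩ := hγ n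
      obtain ⟨hσ0, hσ1⟩ := hedge_bounds (β := β) hM hη (s n i) j
      have hσ0' : 0 ≤ hedge β η (s n i) j := le_trans hηM0 hσ0
      obtain ⟨hs0', hs1'⟩ := ih i j
      obtain ⟨hg0, hg1⟩ := hg_box (s n) ih i j
      simp only [expUpdate, Set.mem_Icc]
      set σ := hedge β η (s n i) j with hσdef
      have ht0 : 0 ≤ γ n * σ := mul_nonneg hγ0 hσ0'
      have ht1 : γ n * σ ≤ 1 := by nlinarith
      constructor
      · nlinarith [mul_nonneg (sub_nonneg.2 ht1) hs0', mul_nonneg ht0 hg0]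
      · nlinarith [mul_le_mul_of_nonneg_left hs1' (sub_nonneg.2 ht1),
          mul_le_mul_of_nonneg_left hg1 ht0]
  intro n
  obtain ⟨hγ0, hγ1⟩ := hγ n
  set A := ‖s n - sbar‖ with hA
  have hA0 : 0 ≤ A := norm_nonneg _
  have hγη : γ n * (η / M) ≤ 1 := by nlinarith
  have hfac : 0 ≤ 1 - γ n * (η / M) * (1 - C₁) := by
    nlinarith [mul_nonneg (mul_nonneg hγ0 hηM0) (by linarith : (0:ℝ) ≤ 1 - C₁)]
  rw [pi_norm_le_iff_of_nonneg (by positivity)]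
  intro i
  rw [pi_norm_le_iff_of_nonneg (by positivity)]
  intro j
  -- entrywise bound
  have hd : |s n i j - sbar i j| ≤ A := by
    have h1 : ‖(s n - sbar) i‖ ≤ A := norm_le_pi_norm _ i
    have h2 : ‖(s n - sbar) i j‖ ≤ ‖(s n - sbar) i‖ := norm_le_pi_norm _ j
    simpa [Real.norm_eq_abs] using h2.trans h1
  have hgc : ‖g (s n) - g sbar‖ ≤ C₁ * A := hg_contr (s n) sbar (hbox n) hsbar_box
  have he : |g (s n) i j - sbar i j| ≤ C₁ * A := by
    have h1 : ‖(g (s n) - g sbar) i‖ ≤ ‖g (s n) - g sbar‖ := norm_le_pi_norm _ i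
    have h2 : ‖(g (s n) - g sbar) i j‖ ≤ ‖(g (s n) - g sbar) i‖ := norm_le_pi_norm _ j
    have := (h2.trans h1).trans hgc
    simpa [Real.norm_eq_abs, hsbar_fix] using this
  obtain ⟨hσ0, hσ1⟩ := hedge_bounds (β := β) hM hη (s n i) j
  set σ := hedge β η (s n i) j with hσ
  have hσnn : 0 ≤ σ := le_trans hηM0 hσ0
  have hkey : (s (n+1) - sbar) i j =
      (1 - γ n * σ) * (s n i j - sbar i j) + γ n * σ * (g (s n) i j - sbar i j) := by
    rw [hrec n]
    simp only [Pi.sub_apply, expUpdate]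
    ring
  rw [Real.norm_eq_abs, hkey]
  have habs : |(1 - γ n * σ) * (s n i j - sbar i j) + γ n * σ * (g (s n) i j - sbar i j)|
      ≤ (1 - γ n * σ) * A + γ n * σ * (C₁ * A) := by
    calc _ ≤ |(1 - γ n * σ) * (s n i j - sbar i j)| + |γ n * σ * (g (s n) i j - sbar i j)| :=
          abs_add_le _ _
    _ = (1 - γ n * σ) * |s n i j - sbar i j| + γ n * σ * |g (s n) i j - sbar i j| := by
          rw [abs_mul, abs_mul, abs_of_nonneg (by nlinarith : (0:ℝ) ≤ 1 - γ n * σ),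
            abs_of_nonneg (by positivity : (0:ℝ) ≤ γ n * σ)]
    _ ≤ _ := by
          have h1 : 0 ≤ 1 - γ n * σ := by nlinarith
          have h2 : 0 ≤ γ n * σ := mul_nonneg hγ0 hσnn
          exact add_le_add (mul_le_mul_of_nonneg_left hd h1)
            (mul_le_mul_of_nonneg_left he h2)
  refine habs.trans ?_
  nlinarith [mul_nonneg (mul_nonneg (mul_nonneg hγ0 hA0)
    (by linarith : (0:ℝ) ≤ 1 - C₁)) (by linarith : (0:ℝ) ≤ σ - η / M)]
end

section
/- Suppose that for each arm j the reward is an affine function of the j-th population coordinate, r_j(x) = c_j + d_j·x with |d_j| ≤ θ, and define the expected reward map F_j(s) = r_j( (1/N)·Σ_{i=1}^N σ(s^i, j) ) on state profiles s = (s^1,…,s^N) ∈ ℝ^{N×M}. Then for all state profiles s_a, s_b, |F_j(s_a) − F_j(s_b)| ≤ (θ(1−η)β/2)·‖s_a − s_b‖_∞. Consequently, if θ(1−η)β/2 < 1, then F_j is a ‖·‖_∞-contraction in the state profile. -/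
open Finset

noncomputable def softmax {ι : Type*} [Fintype ι] (s : ι → ℝ) (j : ι) : ℝ :=
  Real.exp (s j) / ∑ k, Real.exp (s k)

section Softmax

variable {ι : Type*} [Fintype ι]

lemma softmax_nonneg (s : ι → ℝ) (j : ι) : 0 ≤ softmax s j := by
  unfold softmax; positivity

lemma sum_softmax [Nonempty ι] (s : ι → ℝ) : ∑ j, softmax s j = 1 := by
  simp only [softmax, ← sum_div]
  exact div_self (sum_pos (fun k _ => Real.exp_pos _) univ_nonempty).ne'

lemma abs_sub_weighted_sum_le {p : ι → ℝ} (hp : ∀ k, 0 ≤ p k) (hp1 : ∑ k, p k = 1)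
    (u : ι → ℝ) (j : ι) : |u j - ∑ k, p k * u k| ≤ 2 * (1 - p j) * ‖u‖ := by
  classical
  have hu : ∀ k, |u j - u k| ≤ 2 * ‖u‖ := fun k => by
    have := norm_le_pi_norm u j; have := norm_le_pi_norm u k
    rw [Real.norm_eq_abs] at *
    linarith [abs_sub (u j) (u k)]
  have hsplit : u j - ∑ k, p k * u k = ∑ k ∈ univ.erase j, p k * (u j - u k) := by
    rw [sum_erase _ (by simp)]
    simp only [mul_sub, sum_sub_distrib, ← sum_mul, hp1, one_mul]
  calc |u j - ∑ k, p k * u k| ≤ ∑ k ∈ univ.erase j, p k * |u j - u k| := by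
        rw [hsplit]
        refine (abs_sum_le_sum_abs _ _).trans_eq (sum_congr rfl fun k _ => ?_)
        rw [abs_mul, abs_of_nonneg (hp k)]
    _ ≤ ∑ k ∈ univ.erase j, p k * (2 * ‖u‖) :=
        sum_le_sum fun k _ => mul_le_mul_of_nonneg_left (hu k) (hp k)
    _ = 2 * (1 - p j) * ‖u‖ := by
        rw [← sum_mul, sum_erase_eq_sub (mem_univ j), hp1]; ring

lemma hasDerivAt_softmax_add_smul (s u : ι → ℝ) (j : ι) (x : ℝ) :
    HasDerivAt (fun y => softmax (s + y • u) j)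
      (softmax (s + x • u) j * (u j - ∑ k, softmax (s + x • u) k * u k)) x := by
  have hexp : ∀ k, HasDerivAt (fun y => Real.exp ((s + y • u) k))
      (Real.exp ((s + x • u) k) * u k) x := fun k => by
    simpa using (((hasDerivAt_id x).mul_const (u k)).const_add (s k)).exp
  have hZ : (∑ k, Real.exp ((s + x • u) k)) ≠ 0 :=
    (sum_pos (fun k _ => Real.exp_pos _) ⟨j, mem_univ j⟩).ne'
  refine ((hexp j).fun_div (HasDerivAt.fun_sum fun k _ => hexp k) hZ).congr_deriv ?_
  simp only [softmax, div_mul_eq_mul_div, ← sum_div]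
  field_simp

lemma abs_softmax_sub_le (s t : ι → ℝ) (j : ι) :
    |softmax s j - softmax t j| ≤ ‖s - t‖ / 2 := by
  have : Nonempty ι := ⟨j⟩
  set u := s - t
  have hderiv_le : ∀ x : ℝ,
      ‖softmax (t + x • u) j * (u j - ∑ k, softmax (t + x • u) k * u k)‖ ≤ ‖u‖ / 2 := by
    intro x
    set p := softmax (t + x • u)
    have hp := softmax_nonneg (t + x • u)
    rw [Real.norm_eq_abs, abs_mul, abs_of_nonneg (hp j)]
    calc p j * |u j - ∑ k, p k * u k| ≤ p j * (2 * (1 - p j) * ‖u‖) := by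
          gcongr; exacts [hp j, abs_sub_weighted_sum_le hp (sum_softmax _) u j]
      _ ≤ ‖u‖ / 2 := by nlinarith [sq_nonneg (1 - 2 * p j), norm_nonneg u]
  have := norm_image_sub_le_of_norm_deriv_le_segment_01'
    (fun x _ => (hasDerivAt_softmax_add_smul t u j x).hasDerivWithinAt) (fun x _ => hderiv_le x)
  simpa [u] using this

end Softmax

lemma hedge_eq_softmax {M : ℕ} (β η : ℝ) (s : Fin M → ℝ) (j : Fin M) :
    hedge β η s j = (1 - η) * softmax (β • s) j + η / M := by
  simp only [hedge, softmax, Pi.smul_apply, smul_eq_mul, mul_div_assoc]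

lemma abs_hedge_sub_le {M : ℕ} {β η : ℝ} (hβ : 0 ≤ β) (hη : η ≤ 1) (s t : Fin M → ℝ)
    (j : Fin M) :
    |hedge β η s j - hedge β η t j| ≤ (1 - η) * β / 2 * ‖s - t‖ := by
  have h1η : 0 ≤ 1 - η := sub_nonneg.2 hη
  calc |hedge β η s j - hedge β η t j| = (1 - η) * |softmax (β • s) j - softmax (β • t) j| := by
        rw [hedge_eq_softmax, hedge_eq_softmax, add_sub_add_right_eq_sub, ← mul_sub, abs_mul,
          abs_of_nonneg h1η]
    _ ≤ (1 - η) * (‖β • s - β • t‖ / 2) := by gcongr; exact abs_softmax_sub_le _ _ j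
    _ = (1 - η) * β / 2 * ‖s - t‖ := by
        rw [← smul_sub, norm_smul, Real.norm_of_nonneg hβ]; ring

lemma abs_mean_le {N : ℕ} {f : Fin N → ℝ} {B : ℝ} (hB : 0 ≤ B) (hf : ∀ i, |f i| ≤ B) :
    |(1 / N : ℝ) * ∑ i, f i| ≤ B := by
  rcases N.eq_zero_or_pos with rfl | hN
  · simpa using hB
  rw [abs_mul, abs_of_pos (by positivity), one_div_mul_eq_div, div_le_iff₀ (by positivity)]
  calc |∑ i, f i| ≤ ∑ i, |f i| := abs_sum_le_sum_abs _ _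
    _ ≤ ∑ _i : Fin N, B := sum_le_sum fun i _ => hf i
    _ = B * N := by simp [mul_comm]

theorem linear_reward_contraction_general {N M : ℕ}
    (β η θ : ℝ) (hβ : 0 < β) (hη : η ∈ Set.Icc (0 : ℝ) 1)
    (c d : Fin M → ℝ) (hd : ∀ j, |d j| ≤ θ) :
    (∀ (j : Fin M) (sa sb : Fin N → Fin M → ℝ),
      |(c j + d j * ((1 / N) * ∑ i, hedge β η (sa i) j)) -
        (c j + d j * ((1 / N) * ∑ i, hedge β η (sb i) j))|
        ≤ θ * (1 - η) * β / 2 * ‖sa - sb‖) ∧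
    (θ * (1 - η) * β / 2 < 1 →
      ∀ j : Fin M, ∃ C : ℝ, 0 ≤ C ∧ C < 1 ∧
        ∀ sa sb : Fin N → Fin M → ℝ,
          |(c j + d j * ((1 / N) * ∑ i, hedge β η (sa i) j)) -
            (c j + d j * ((1 / N) * ∑ i, hedge β η (sb i) j))|
            ≤ C * ‖sa - sb‖) := by
  have hslope : 0 ≤ (1 - η) * β / 2 :=
    div_nonneg (mul_nonneg (sub_nonneg.2 hη.2) hβ.le) zero_le_two
  have lipschitz : ∀ (j : Fin M) (sa sb : Fin N → Fin M → ℝ),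
      |(c j + d j * ((1 / N) * ∑ i, hedge β η (sa i) j)) -
        (c j + d j * ((1 / N) * ∑ i, hedge β η (sb i) j))|
        ≤ θ * (1 - η) * β / 2 * ‖sa - sb‖ := by
    intro j sa sb
    have hagent : ∀ i,
        |hedge β η (sa i) j - hedge β η (sb i) j| ≤ (1 - η) * β / 2 * ‖sa - sb‖ := fun i =>
      (abs_hedge_sub_le hβ.le hη.2 _ _ j).trans <| by gcongr; exact norm_le_pi_norm (sa - sb) i
    calc _ = |d j| * |(1 / N : ℝ) * ∑ i, (hedge β η (sa i) j - hedge β η (sb i) j)| := by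
          rw [← abs_mul, sum_sub_distrib]; ring_nf
      _ ≤ θ * ((1 - η) * β / 2 * ‖sa - sb‖) :=
          mul_le_mul (hd j) (abs_mean_le (mul_nonneg hslope (norm_nonneg _)) hagent) (abs_nonneg _)
            ((abs_nonneg _).trans (hd j))
      _ = _ := by ring
  refine ⟨lipschitz, fun hlt j => ⟨_, ?_, hlt, lipschitz j⟩⟩
  linarith [mul_nonneg ((abs_nonneg _).trans (hd j)) hslope]

/-- Corollary 1 of the paper: if the reward of arm `j` is an affine
function `r_j(x) = c_j + d_j·x` of the `j`-th expected population coordinate with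
`|d_j| ≤ θ`, then the expected reward map
`F_j(s) = r_j((1/N)·Σ_i σ(s^i,j))` is `(θ(1−η)β/2)`-Lipschitz in `‖·‖_∞`;
consequently, if `θ(1−η)β/2 < 1`, it is a `‖·‖_∞`-contraction. -/
theorem linear_reward_contraction {N M : ℕ} (hN : 1 ≤ N) (hM : 1 ≤ M)
    (β η θ : ℝ) (hβ : 0 < β) (hη : η ∈ Set.Icc (0 : ℝ) 1) (hθ : 0 ≤ θ)
    (c d : Fin M → ℝ) (hd : ∀ j, |d j| ≤ θ) :
    (∀ (j : Fin M) (sa sb : Fin N → Fin M → ℝ),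
      |(c j + d j * ((1 / N) * ∑ i, hedge β η (sa i) j)) -
        (c j + d j * ((1 / N) * ∑ i, hedge β η (sb i) j))|
        ≤ θ * (1 - η) * β / 2 * ‖sa - sb‖) ∧
    (θ * (1 - η) * β / 2 < 1 →
      ∀ j : Fin M, ∃ C : ℝ, 0 ≤ C ∧ C < 1 ∧
        ∀ sa sb : Fin N → Fin M → ℝ,
          |(c j + d j * ((1 / N) * ∑ i, hedge β η (sa i) j)) -
            (c j + d j * ((1 / N) * ∑ i, hedge β η (sb i) j))|
            ≤ C * ‖sa - sb‖) :=
  linear_reward_contraction_general β η θ hβ hη c d hd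
end

section
/- Suppose each agent i uses its own Hedge policy σ^i with parameters β^i > 0 and η^i ∈ [0,1], and let β_max = max_{1≤i≤N} β^i. Define the heterogeneous expected reward R_i(s,j) = Σ over action profiles a with a(i) = j of (∏_{m ≠ i} σ^m(s^m, a(m))) · r(f(a), j). Then for every agent i, every arm j, and all state profiles s_a, s_b ∈ ℝ^{N×M}, |R_i(s_a, j) − R_i(s_b, j)| ≤ 4θ·β_max·‖s_a − s_b‖_∞; hence if 4θ·β_max < 1 this map is a ‖·‖_∞-contraction in the state profile. -/
open Finset

/-- Population profile: fraction of agents playing each arm. -/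
noncomputable def popProfile {N M : ℕ} (a : Fin N → Fin M) (j : Fin M) : ℝ :=
  ((Finset.univ.filter (fun i => a i = j)).card : ℝ) / N

/-- Heterogeneous expected reward to agent `i` of playing arm `j`: each other agent
`m` plays according to its own Hedge policy with parameters `β m`, `η m`. -/
noncomputable def expRewardHet {N M : ℕ} (β η : Fin N → ℝ)
    (r : (Fin M → ℝ) → Fin M → ℝ)
    (s : Fin N → Fin M → ℝ) (i : Fin N) (j : Fin M) : ℝ :=
  ∑ a : Fin N → Fin M,
    if a i = j then
      (∏ m ∈ Finset.univ.erase i, hedge (β m) (η m) (s m) (a m)) * r (popProfile a) j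
    else 0

lemma expsum_pos {M : ℕ} (hM : 1 ≤ M) (β : ℝ) (s : Fin M → ℝ) :
    0 < ∑ k, Real.exp (β * s k) := by
  have : Nonempty (Fin M) := ⟨⟨0, hM⟩⟩
  exact Finset.sum_pos (fun k _ => Real.exp_pos _) univ_nonempty

lemma hedge_nonneg {M : ℕ} (hM : 1 ≤ M) {β η : ℝ} (hη : η ∈ Set.Icc (0:ℝ) 1)
    (s : Fin M → ℝ) (j : Fin M) : 0 ≤ hedge β η s j := by
  unfold hedge
  have h1 := expsum_pos hM β s
  have : (0:ℝ) ≤ (1 - η) * Real.exp (β * s j) / (∑ k, Real.exp (β * s k)) :=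
    div_nonneg (mul_nonneg (by linarith [hη.2]) (Real.exp_pos _).le) h1.le
  have : (0:ℝ) ≤ η / M := div_nonneg hη.1 (by positivity)
  linarith

lemma hedge_sum {M : ℕ} (hM : 1 ≤ M) (β η : ℝ) (s : Fin M → ℝ) :
    ∑ j, hedge β η s j = 1 := by
  unfold hedge
  rw [Finset.sum_add_distrib]
  have h1 := expsum_pos hM β s
  have : ∑ j : Fin M, (1 - η) * Real.exp (β * s j) / (∑ k, Real.exp (β * s k))
      = (1 - η) := by
    rw [← Finset.sum_div, ← Finset.mul_sum, mul_div_assoc, div_self h1.ne']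
    ring
  rw [this]
  have : ∑ _j : Fin M, η / M = η := by
    rw [Finset.sum_const, card_univ, Fintype.card_fin, nsmul_eq_mul]
    field_simp
  rw [this]; ring

/-- one-sided ratio bound -/
lemma hedge_sub_le {M : ℕ} (hM : 1 ≤ M) {β η d : ℝ} (hβ : 0 < β)
    (hη : η ∈ Set.Icc (0:ℝ) 1) (hd : 0 ≤ d)
    {s s' : Fin M → ℝ} (hdist : ∀ k, |s k - s' k| ≤ d) (j : Fin M) :
    hedge β η s j - hedge β η s' j ≤ (1 - Real.exp (-(2*β*d))) * hedge β η s j := by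
  set Z := ∑ k, Real.exp (β * s k) with hZ
  set Z' := ∑ k, Real.exp (β * s' k) with hZ'
  have hZpos := expsum_pos hM β s
  have hZ'pos := expsum_pos hM β s'
  set p := Real.exp (β * s j) / Z with hp
  set q := Real.exp (β * s' j) / Z' with hq
  have hppos : 0 < p := div_pos (Real.exp_pos _) hZpos
  have hnum : Real.exp (-(β*d)) * Real.exp (β * s j) ≤ Real.exp (β * s' j) := by
    rw [← Real.exp_add]
    apply Real.exp_le_exp.2
    have h := (abs_le.1 (hdist j)).2
    nlinarith [mul_le_mul_of_nonneg_left h hβ.le]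
  have hden : Z' ≤ Real.exp (β*d) * Z := by
    rw [hZ, hZ', Finset.mul_sum]
    apply Finset.sum_le_sum
    intro k _
    rw [← Real.exp_add]
    apply Real.exp_le_exp.2
    have h := (abs_le.1 (hdist k)).1
    nlinarith [mul_le_mul_of_nonneg_left h hβ.le]
  have hq_ge : Real.exp (-(2*β*d)) * p ≤ q := by
    have heq : Real.exp (-(2*β*d)) * p
        = (Real.exp (-(β*d)) * Real.exp (β * s j)) / (Real.exp (β*d) * Z) := by
      rw [hp, show -(2*β*d) = -(β*d) + -(β*d) by ring, Real.exp_add,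
        Real.exp_neg (β*d)]
      field_simp
    rw [heq, hq]
    exact div_le_div₀ (Real.exp_pos _).le hnum hZ'pos hden
  have hdiff : hedge β η s j - hedge β η s' j = (1 - η) * (p - q) := by
    unfold hedge; rw [hp, hq, ← hZ, ← hZ']; ring
  have hc : 0 ≤ 1 - Real.exp (-(2*β*d)) := by
    have : Real.exp (-(2*β*d)) ≤ 1 := Real.exp_le_one_iff.2 (by nlinarith)
    linarith
  have h1η : 0 ≤ 1 - η := by linarith [hη.2]
  have hpq : p - q ≤ (1 - Real.exp (-(2*β*d))) * p := by nlinarith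
  rw [hdiff]
  have hhedge_ge : (1 - η) * p ≤ hedge β η s j := by
    unfold hedge; rw [hp, ← hZ]
    have : (0:ℝ) ≤ η / M := div_nonneg hη.1 (by positivity)
    rw [mul_div_assoc]
    linarith
  calc (1 - η) * (p - q) ≤ (1 - η) * ((1 - Real.exp (-(2*β*d))) * p) :=
        mul_le_mul_of_nonneg_left hpq h1η
    _ = (1 - Real.exp (-(2*β*d))) * ((1-η) * p) := by ring
    _ ≤ (1 - Real.exp (-(2*β*d))) * hedge β η s j :=
        mul_le_mul_of_nonneg_left hhedge_ge hc

lemma hedge_l1 {M : ℕ} (hM : 1 ≤ M) {β η d : ℝ} (hβ : 0 < β)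
    (hη : η ∈ Set.Icc (0:ℝ) 1) (hd : 0 ≤ d)
    {s s' : Fin M → ℝ} (hdist : ∀ k, |s k - s' k| ≤ d) :
    ∑ k, |hedge β η s k - hedge β η s' k| ≤ 4 * β * d := by
  set c := 1 - Real.exp (-(2*β*d)) with hcdef
  have hbd : 0 ≤ 2*β*d := by positivity
  have hc : 0 ≤ c := by
    have : Real.exp (-(2*β*d)) ≤ 1 := Real.exp_le_one_iff.2 (by linarith)
    rw [hcdef]; linarith
  have key : ∀ k, |hedge β η s k - hedge β η s' k| ≤ c * (hedge β η s k + hedge β η s' k) := by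
    intro k
    have h1 := hedge_sub_le hM hβ hη hd hdist k
    have h2 := hedge_sub_le hM hβ hη hd (fun k => by rw [abs_sub_comm]; exact hdist k) k
    have hn1 : 0 ≤ hedge β η s k := hedge_nonneg hM hη s k
    have hn2 : 0 ≤ hedge β η s' k := hedge_nonneg hM hη s' k
    rw [abs_le]
    constructor <;> nlinarith
  calc ∑ k, |hedge β η s k - hedge β η s' k|
      ≤ ∑ k, c * (hedge β η s k + hedge β η s' k) := Finset.sum_le_sum (fun k _ => key k)
    _ = c * 2 := by
        rw [← Finset.mul_sum, Finset.sum_add_distrib, hedge_sum hM, hedge_sum hM]; norm_num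
    _ ≤ 4 * β * d := by
        have : 1 - (2*β*d) ≤ Real.exp (-(2*β*d)) := by
          have := Real.add_one_le_exp (-(2*β*d)); linarith
        simp only [hcdef]
        nlinarith

lemma popProfile_nonneg {N M : ℕ} (a : Fin N → Fin M) (j : Fin M) :
    0 ≤ popProfile a j := by unfold popProfile; positivity

lemma popProfile_sum {N M : ℕ} (hN : 1 ≤ N) (a : Fin N → Fin M) :
    ∑ j, popProfile a j = 1 := by
  unfold popProfile
  rw [← Finset.sum_div]
  rw [show ∑ j, ((Finset.univ.filter (fun i => a i = j)).card : ℝ)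
      = ((∑ j, (Finset.univ.filter (fun i => a i = j)).card : ℕ) : ℝ) by push_cast; ring]
  rw [← Finset.card_eq_sum_card_fiberwise (f := a) (s := univ) (t := univ)
      (fun x _ => mem_univ _)]
  rw [card_univ, Fintype.card_fin]
  field_simp

lemma card_diff_le_one {N : ℕ} (A B : Finset (Fin N)) (m : Fin N)
    (h : ∀ x, x ≠ m → (x ∈ A ↔ x ∈ B)) : |(A.card : ℝ) - B.card| ≤ 1 := by
  have h1 : A ⊆ insert m B := by
    intro x hx
    rcases eq_or_ne x m with rfl | hxm
    · exact mem_insert_self _ _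
    · exact mem_insert_of_mem ((h x hxm).1 hx)
  have h2 : B ⊆ insert m A := by
    intro x hx
    rcases eq_or_ne x m with rfl | hxm
    · exact mem_insert_self _ _
    · exact mem_insert_of_mem ((h x hxm).2 hx)
  have c1 : A.card ≤ B.card + 1 := le_trans (card_le_card h1) (card_insert_le _ _)
  have c2 : B.card ≤ A.card + 1 := le_trans (card_le_card h2) (card_insert_le _ _)
  have d1 : (A.card:ℝ) ≤ (B.card:ℝ) + 1 := by exact_mod_cast c1
  have d2 : (B.card:ℝ) ≤ (A.card:ℝ) + 1 := by exact_mod_cast c2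
  rw [abs_le]
  constructor <;> linarith

/-- single-agent change moves the population profile by at most `2/N` in ℓ¹. -/
lemma popProfile_l1 {N M : ℕ} (hN : 1 ≤ N) (a a' : Fin N → Fin M) (m : Fin N)
    (hagree : ∀ x, x ≠ m → a x = a' x) :
    ∑ j, |popProfile a j - popProfile a' j| ≤ 2 / N := by
  have hNpos : (0:ℝ) < N := by exact_mod_cast hN
  have hsets : ∀ (j : Fin M) (x : Fin N), x ≠ m →
      (x ∈ univ.filter (fun i => a i = j) ↔ x ∈ univ.filter (fun i => a' i = j)) := by
    intro j x hx; simp [hagree x hx]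
  have key : ∀ j, |popProfile a j - popProfile a' j|
      ≤ ((if j = a m then 1 else 0) + (if j = a' m then 1 else 0)) / N := by
    intro j
    have hform : |popProfile a j - popProfile a' j|
        = |((univ.filter (fun i => a i = j)).card : ℝ)
            - ((univ.filter (fun i => a' i = j)).card : ℝ)| / N := by
      unfold popProfile; rw [div_sub_div_same, abs_div, abs_of_pos hNpos]
    rw [hform]
    by_cases h1 : j = a m
    · have hcard := card_diff_le_one (univ.filter (fun i => a i = j))
        (univ.filter (fun i => a' i = j)) m (hsets j)
      have hge : (1:ℝ) ≤ (if j = a m then 1 else 0) + (if j = a' m then 1 else 0) := by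
        rw [if_pos h1]
        split <;> norm_num
      apply div_le_div_of_nonneg_right (c := (N:ℝ)) ?_ hNpos.le
      exact le_trans hcard hge
    · by_cases h2 : j = a' m
      · have hcard := card_diff_le_one (univ.filter (fun i => a i = j))
          (univ.filter (fun i => a' i = j)) m (hsets j)
        have hge : (1:ℝ) ≤ (if j = a m then 1 else 0) + (if j = a' m then 1 else 0) := by
          rw [if_pos h2]
          split <;> norm_num
        apply div_le_div_of_nonneg_right (c := (N:ℝ)) ?_ hNpos.le
        exact le_trans hcard hge
      · have heqset : univ.filter (fun i => a i = j) = univ.filter (fun i => a' i = j) := by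
          ext x
          rcases eq_or_ne x m with rfl | hx
          · simp only [mem_filter, mem_univ, true_and]
            constructor
            · intro h; exact absurd h.symm h1
            · intro h; exact absurd h.symm h2
          · exact hsets j x hx
        rw [heqset]
        simp [h1, h2]
  calc ∑ j, |popProfile a j - popProfile a' j|
      ≤ ∑ j, ((if j = a m then (1:ℝ) else 0) + (if j = a' m then 1 else 0)) / N :=
        Finset.sum_le_sum (fun j _ => key j)
    _ = 2 / N := by
        rw [← Finset.sum_div, Finset.sum_add_distrib,
          Finset.sum_ite_eq' univ (a m) (fun _ => (1:ℝ)),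
          Finset.sum_ite_eq' univ (a' m) (fun _ => (1:ℝ))]
        norm_num

/-- centering bound: difference of expectations under two weight vectors. -/
lemma center_bound {M : ℕ} (hM : 1 ≤ M) (wa wb ρ : Fin M → ℝ)
    (ha : ∑ x, wa x = 1) (hb : ∑ x, wb x = 1) (D : ℝ)
    (hosc : ∀ x y, |ρ x - ρ y| ≤ D) :
    |∑ x, (wa x - wb x) * ρ x| ≤ D / 2 * ∑ x, |wa x - wb x| := by
  have : Nonempty (Fin M) := ⟨⟨0, hM⟩⟩
  set c := ((univ.inf' univ_nonempty ρ) + (univ.sup' univ_nonempty ρ)) / 2 with hc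
  have hle : ∀ x, |ρ x - c| ≤ D / 2 := by
    intro x
    obtain ⟨x1, -, h1⟩ := Finset.exists_mem_eq_sup' univ_nonempty ρ
    obtain ⟨x2, -, h2⟩ := Finset.exists_mem_eq_inf' univ_nonempty ρ
    have hs : ρ x ≤ univ.sup' univ_nonempty ρ := Finset.le_sup' ρ (mem_univ x)
    have hi : univ.inf' univ_nonempty ρ ≤ ρ x := Finset.inf'_le ρ (mem_univ x)
    have hD : univ.sup' univ_nonempty ρ - univ.inf' univ_nonempty ρ ≤ D := by
      rw [h1, h2]
      have := hosc x1 x2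
      rw [abs_le] at this
      linarith [this.2]
    rw [abs_le, hc]
    constructor <;> linarith
  have hzero : ∑ x, (wa x - wb x) * c = 0 := by
    rw [← Finset.sum_mul, Finset.sum_sub_distrib, ha, hb]; ring
  have hsplit : ∑ x, (wa x - wb x) * (ρ x - c)
      = ∑ x, (wa x - wb x) * ρ x - ∑ x, (wa x - wb x) * c := by
    rw [← Finset.sum_sub_distrib]
    exact Finset.sum_congr rfl (fun x _ => by ring)
  calc |∑ x, (wa x - wb x) * ρ x| = |∑ x, (wa x - wb x) * (ρ x - c)| := by
        rw [hsplit, hzero, sub_zero]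
    _ ≤ ∑ x, |(wa x - wb x) * (ρ x - c)| := Finset.abs_sum_le_sum_abs _ _
    _ ≤ ∑ x, |wa x - wb x| * (D / 2) := by
        apply Finset.sum_le_sum
        intro x _
        rw [abs_mul]
        exact mul_le_mul_of_nonneg_left (hle x) (abs_nonneg _)
    _ = D / 2 * ∑ x, |wa x - wb x| := by rw [← Finset.sum_mul]; ring

/-- Reconstruction of a full action profile from coordinate `m` and the rest. -/
def recon {N M : ℕ} (m : Fin N) (g : {x : Fin N // x ≠ m} → Fin M) (x : Fin M) :
    Fin N → Fin M := fun a => if h : a = m then x else g ⟨a, h⟩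

lemma recon_self {N M : ℕ} (m : Fin N) (g : {x : Fin N // x ≠ m} → Fin M) (x : Fin M) :
    recon m g x m = x := by simp [recon]

lemma recon_ne {N M : ℕ} (m : Fin N) (g : {x : Fin N // x ≠ m} → Fin M) (x : Fin M)
    {a : Fin N} (h : a ≠ m) : recon m g x a = g ⟨a, h⟩ := by simp [recon, h]

lemma sum_recon {N M : ℕ} (F : (Fin N → Fin M) → ℝ) (m : Fin N) :
    ∑ a : Fin N → Fin M, F a
      = ∑ g : {x : Fin N // x ≠ m} → Fin M, ∑ x : Fin M, F (recon m g x) := by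
  rw [← Equiv.sum_comp (Equiv.funSplitAt m (Fin M)).symm F, Fintype.sum_prod_type,
    Finset.sum_comm]
  apply Finset.sum_congr rfl
  intro g _
  apply Finset.sum_congr rfl
  intro x _
  congr 1
  funext a
  by_cases h : a = m
  · subst h
    simp [recon, Equiv.funSplitAt, Equiv.piSplitAt]
  · simp [recon, h, Equiv.funSplitAt, Equiv.piSplitAt]

lemma expRewardHet_congr {N M : ℕ} (β η : Fin N → ℝ) (r : (Fin M → ℝ) → Fin M → ℝ)
    (sa sb : Fin N → Fin M → ℝ) (i : Fin N) (j : Fin M)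
    (h : ∀ m, m ≠ i → sa m = sb m) :
    expRewardHet β η r sa i j = expRewardHet β η r sb i j := by
  unfold expRewardHet
  apply Finset.sum_congr rfl
  intro a _
  by_cases hc : a i = j
  · rw [if_pos hc, if_pos hc]
    congr 1
    apply Finset.prod_congr rfl
    intro m hm
    rw [h m (Finset.ne_of_mem_erase hm)]
  · rw [if_neg hc, if_neg hc]

lemma step_bound {N M : ℕ} (hN : 1 ≤ N) (hM : 1 ≤ M) (β η : Fin N → ℝ)
    (hβ : ∀ i, 0 < β i) (hη : ∀ i, η i ∈ Set.Icc (0 : ℝ) 1)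
    (θ : ℝ) (hθ : 0 ≤ θ) (r : (Fin M → ℝ) → Fin M → ℝ)
    (hr_lip : ∀ p q : Fin M → ℝ, (∀ j, 0 ≤ p j) → ∑ j, p j = 1 →
      (∀ j, 0 ≤ q j) → ∑ j, q j = 1 →
      ∀ j, |r p j - r q j| ≤ θ * ∑ k, |p k - q k|)
    (i m : Fin N) (hmi : m ≠ i) (j : Fin M)
    (sa sb : Fin N → Fin M → ℝ) (hagree : ∀ m', m' ≠ m → sa m' = sb m')
    (d : ℝ) (hd : 0 ≤ d) (hdist : ∀ k, |sa m k - sb m k| ≤ d) :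
    |expRewardHet β η r sa i j - expRewardHet β η r sb i j| ≤ θ / N * (4 * β m * d) := by
  have him : i ≠ m := hmi.symm
  have hNpos : (0:ℝ) < N := by exact_mod_cast hN
  set t₀ : {x : Fin N // x ≠ m} := ⟨i, him⟩ with ht₀
  set wa : Fin M → ℝ := fun x => hedge (β m) (η m) (sa m) x with hwa
  set wb : Fin M → ℝ := fun x => hedge (β m) (η m) (sb m) x with hwb
  set W : ({x : Fin N // x ≠ m} → Fin M) → ℝ := fun g =>
    ∏ m' ∈ (Finset.univ.erase i).erase m, hedge (β m') (η m') (sa m') (recon m g j m')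
    with hW
  have hmem : m ∈ Finset.univ.erase i := Finset.mem_erase.2 ⟨hmi, Finset.mem_univ _⟩
  have hrep : ∀ (s : Fin N → Fin M → ℝ), (∀ m', m' ≠ m → s m' = sa m') →
      expRewardHet β η r s i j
        = ∑ g : {x : Fin N // x ≠ m} → Fin M,
            if g t₀ = j then
              W g * ∑ x : Fin M, hedge (β m) (η m) (s m) x * r (popProfile (recon m g x)) j
            else 0 := by
    intro s hs
    unfold expRewardHet
    rw [sum_recon (fun a => if a i = j then
      (∏ m' ∈ Finset.univ.erase i, hedge (β m') (η m') (s m') (a m')) * r (popProfile a) j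
      else 0) m]
    apply Finset.sum_congr rfl
    intro g _
    by_cases hc : g t₀ = j
    · rw [if_pos hc, Finset.mul_sum]
      apply Finset.sum_congr rfl
      intro x _
      have hcond : recon m g x i = j := by rw [recon_ne m g x him]; exact hc
      rw [if_pos hcond]
      have hprod : ∏ m' ∈ Finset.univ.erase i, hedge (β m') (η m') (s m') (recon m g x m')
          = hedge (β m) (η m) (s m) x * W g := by
        rw [← Finset.mul_prod_erase _ _ hmem, recon_self]
        congr 1
        apply Finset.prod_congr rfl
        intro m' hm'
        have hm'm : m' ≠ m := (Finset.mem_erase.1 hm').1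
        rw [recon_ne m g x hm'm, recon_ne m g j hm'm, hs m' hm'm]
      rw [hprod]
      ring
    · rw [if_neg hc]
      apply Finset.sum_eq_zero
      intro x _
      have hcond : ¬ recon m g x i = j := by rw [recon_ne m g x him]; exact hc
      rw [if_neg hcond]
  have hra := hrep sa (fun m' _ => rfl)
  have hrb := hrep sb (fun m' h => (hagree m' h).symm)
  set L1 : ℝ := ∑ x, |wa x - wb x| with hL1
  have hL1nonneg : 0 ≤ L1 := Finset.sum_nonneg (fun x _ => abs_nonneg _)
  have hL1le : L1 ≤ 4 * β m * d := hedge_l1 hM (hβ m) (hη m) hd (fun k => hdist k)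
  have hinner : ∀ g : {x : Fin N // x ≠ m} → Fin M,
      |∑ x : Fin M, (wa x - wb x) * r (popProfile (recon m g x)) j| ≤ θ / N * L1 := by
    intro g
    have hosc : ∀ x y : Fin M,
        |r (popProfile (recon m g x)) j - r (popProfile (recon m g y)) j| ≤ 2 * θ / N := by
      intro x y
      have hag : ∀ a, a ≠ m → recon m g x a = recon m g y a := by
        intro a ha
        rw [recon_ne m g x ha, recon_ne m g y ha]
      calc |r (popProfile (recon m g x)) j - r (popProfile (recon m g y)) j|
          ≤ θ * ∑ k, |popProfile (recon m g x) k - popProfile (recon m g y) k| :=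
            hr_lip _ _ (popProfile_nonneg _) (popProfile_sum hN _)
              (popProfile_nonneg _) (popProfile_sum hN _) j
        _ ≤ θ * (2 / N) :=
            mul_le_mul_of_nonneg_left (popProfile_l1 hN _ _ m hag) hθ
        _ = 2 * θ / N := by ring
    have hcb := center_bound hM wa wb (fun x => r (popProfile (recon m g x)) j)
      (hedge_sum hM _ _ _) (hedge_sum hM _ _ _) (2 * θ / N) hosc
    calc |∑ x : Fin M, (wa x - wb x) * r (popProfile (recon m g x)) j|
        ≤ (2 * θ / N) / 2 * L1 := hcb
      _ = θ / N * L1 := by ring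
  have hWnonneg : ∀ g, 0 ≤ W g :=
    fun g => Finset.prod_nonneg (fun m' _ => hedge_nonneg hM (hη m') _ _)
  have hWsum : ∑ g : {x : Fin N // x ≠ m} → Fin M, (if g t₀ = j then W g else 0) = 1 := by
    set f : {x : Fin N // x ≠ m} → Fin M → ℝ := fun t x =>
      if (t : Fin N) = i then (if x = j then 1 else 0)
      else hedge (β t) (η t) (sa t) x with hf
    have hstepA : ∀ g : {x : Fin N // x ≠ m} → Fin M,
        (if g t₀ = j then W g else 0) = ∏ t : {x : Fin N // x ≠ m}, f t (g t) := by
      intro g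
      rw [← Finset.mul_prod_erase Finset.univ (fun t => f t (g t)) (Finset.mem_univ t₀)]
      have h1 : f t₀ (g t₀) = if g t₀ = j then 1 else 0 := by
        rw [hf]; simp [ht₀]
      have h2 : ∏ t ∈ Finset.univ.erase t₀, f t (g t) = W g := by
        show _ = ∏ m' ∈ (Finset.univ.erase i).erase m,
          hedge (β m') (η m') (sa m') (recon m g j m')
        refine Finset.prod_bij' (fun t _ => (t : Fin N))
          (fun m' hm' => ⟨m', (Finset.mem_erase.1 hm').1⟩) ?_ ?_ ?_ ?_ ?_
        · intro t ht
          have ht' : t ≠ t₀ := (Finset.mem_erase.1 ht).1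
          have hti : (t : Fin N) ≠ i := fun hcon => ht' (Subtype.ext hcon)
          exact Finset.mem_erase.2 ⟨t.2, Finset.mem_erase.2 ⟨hti, Finset.mem_univ _⟩⟩
        · intro m' hm'
          have h2' : m' ≠ i := (Finset.mem_erase.1 (Finset.mem_erase.1 hm').2).1
          refine Finset.mem_erase.2 ⟨?_, Finset.mem_univ _⟩
          intro hcon
          exact h2' (congrArg Subtype.val hcon)
        · intro t ht; rfl
        · intro m' hm'; rfl
        · intro t ht
          have ht' : t ≠ t₀ := (Finset.mem_erase.1 ht).1
          have hti : (t : Fin N) ≠ i := fun hcon => ht' (Subtype.ext hcon)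
          rw [hf]
          simp only [if_neg hti]
          rw [recon_ne m g j t.2]
      rw [h1, h2]
      by_cases hc : g t₀ = j
      · rw [if_pos hc, if_pos hc, one_mul]
      · rw [if_neg hc, if_neg hc, zero_mul]
    rw [Finset.sum_congr rfl (fun g _ => hstepA g), ← Fintype.prod_sum]
    apply Finset.prod_eq_one
    intro t _
    by_cases hti : (t : Fin N) = i
    · have heq : ∑ x, f t x = ∑ x : Fin M, if x = j then (1:ℝ) else 0 := by
        apply Finset.sum_congr rfl
        intro x _
        rw [hf]
        simp [hti]
      rw [heq, Finset.sum_ite_eq' Finset.univ j (fun _ => (1:ℝ))]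
      simp
    · have heq : ∑ x, f t x = ∑ x, hedge (β t) (η t) (sa t) x := by
        apply Finset.sum_congr rfl
        intro x _
        rw [hf]
        simp [hti]
      rw [heq]
      exact hedge_sum hM _ _ _
  rw [hra, hrb, ← Finset.sum_sub_distrib]
  have hterm : ∀ g : {x : Fin N // x ≠ m} → Fin M,
      |(if g t₀ = j then
          W g * ∑ x : Fin M, wa x * r (popProfile (recon m g x)) j else 0)
        - (if g t₀ = j then
          W g * ∑ x : Fin M, wb x * r (popProfile (recon m g x)) j else 0)|
        ≤ (if g t₀ = j then W g else 0) * (θ / N * L1) := by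
    intro g
    by_cases hc : g t₀ = j
    · rw [if_pos hc, if_pos hc, if_pos hc, ← mul_sub, ← Finset.sum_sub_distrib]
      have hsum_eq : ∑ x : Fin M, (wa x * r (popProfile (recon m g x)) j
          - wb x * r (popProfile (recon m g x)) j)
          = ∑ x : Fin M, (wa x - wb x) * r (popProfile (recon m g x)) j :=
        Finset.sum_congr rfl (fun x _ => by ring)
      rw [hsum_eq, abs_mul, abs_of_nonneg (hWnonneg g)]
      exact mul_le_mul_of_nonneg_left (hinner g) (hWnonneg g)
    · rw [if_neg hc, if_neg hc, if_neg hc, sub_zero, abs_zero, zero_mul]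
  calc |∑ g : {x : Fin N // x ≠ m} → Fin M,
        ((if g t₀ = j then
            W g * ∑ x : Fin M, wa x * r (popProfile (recon m g x)) j else 0)
          - (if g t₀ = j then
            W g * ∑ x : Fin M, wb x * r (popProfile (recon m g x)) j else 0))|
      ≤ ∑ g : {x : Fin N // x ≠ m} → Fin M,
          (if g t₀ = j then W g else 0) * (θ / N * L1) := by
        refine le_trans (Finset.abs_sum_le_sum_abs _ _) ?_
        exact Finset.sum_le_sum (fun g _ => hterm g)
    _ = θ / N * L1 := by rw [← Finset.sum_mul, hWsum, one_mul]
    _ ≤ θ / N * (4 * β m * d) := by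
        apply mul_le_mul_of_nonneg_left hL1le
        positivity

lemma telescope_abs (f : ℕ → ℝ) (n : ℕ) :
    |f n - f 0| ≤ ∑ t ∈ Finset.range n, |f (t+1) - f t| := by
  induction n with
  | zero => simp
  | succ n ih =>
    rw [Finset.sum_range_succ]
    have h := abs_sub_le (f (n+1)) (f n) (f 0)
    linarith

/-- with heterogeneous learning parameters, the expected reward map is
`4θβ_max`-Lipschitz in the state profile w.r.t. `‖·‖_∞` (`β_max = max_i β^i`);
hence if `4θβ_max < 1` it is a `‖·‖_∞`-contraction. -/
theorem expRewardHet_contraction {N M : ℕ} (hN : 1 ≤ N) (hM : 1 ≤ M)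
    (β η : Fin N → ℝ) (hβ : ∀ i, 0 < β i) (hη : ∀ i, η i ∈ Set.Icc (0 : ℝ) 1)
    (θ : ℝ) (hθ : 0 ≤ θ)
    (r : (Fin M → ℝ) → Fin M → ℝ)
    (hr_range : ∀ p : Fin M → ℝ, (∀ j, 0 ≤ p j) → ∑ j, p j = 1 →
      ∀ j, r p j ∈ Set.Icc (0 : ℝ) 1)
    (hr_lip : ∀ p q : Fin M → ℝ, (∀ j, 0 ≤ p j) → ∑ j, p j = 1 →
      (∀ j, 0 ≤ q j) → ∑ j, q j = 1 →
      ∀ j, |r p j - r q j| ≤ θ * ∑ k, |p k - q k|) :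
    (∀ (i : Fin N) (j : Fin M) (sa sb : Fin N → Fin M → ℝ),
      |expRewardHet β η r sa i j - expRewardHet β η r sb i j|
        ≤ 4 * θ * (Finset.univ.sup' ⟨⟨0, hN⟩, Finset.mem_univ _⟩ β) * ‖sa - sb‖) ∧
    (4 * θ * (Finset.univ.sup' ⟨⟨0, hN⟩, Finset.mem_univ _⟩ β) < 1 →
      ∀ (i : Fin N) (j : Fin M), ∃ C : ℝ, 0 ≤ C ∧ C < 1 ∧
        ∀ sa sb : Fin N → Fin M → ℝ,
          |expRewardHet β η r sa i j - expRewardHet β η r sb i j|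
            ≤ C * ‖sa - sb‖) := by
  set βmax : ℝ := Finset.univ.sup' ⟨⟨0, hN⟩, Finset.mem_univ _⟩ β with hβmaxdef
  have hβmaxle : ∀ m, β m ≤ βmax := fun m => Finset.le_sup' β (mem_univ m)
  have hβmaxpos : 0 < βmax := lt_of_lt_of_le (hβ ⟨0, hN⟩) (hβmaxle _)
  have hNpos : (0:ℝ) < N := by exact_mod_cast hN
  have hpart1 : ∀ (i : Fin N) (j : Fin M) (sa sb : Fin N → Fin M → ℝ),
      |expRewardHet β η r sa i j - expRewardHet β η r sb i j|
        ≤ 4 * θ * βmax * ‖sa - sb‖ := by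
    intro i j sa sb
    set d : ℝ := ‖sa - sb‖ with hdd
    have hd : 0 ≤ d := norm_nonneg _
    have hdist : ∀ (m : Fin N) (k : Fin M), |sa m k - sb m k| ≤ d := by
      intro m k
      have h1 : |(sa - sb) m k| ≤ ‖(sa - sb) m‖ := by
        rw [← Real.norm_eq_abs]
        exact norm_le_pi_norm ((sa - sb) m) k
      have h2 : ‖(sa - sb) m‖ ≤ ‖sa - sb‖ := norm_le_pi_norm (sa - sb) m
      have h3 : (sa - sb) m k = sa m k - sb m k := rfl
      rw [h3] at h1
      exact le_trans h1 h2
    set hyb : ℕ → (Fin N → Fin M → ℝ) := fun t m => if (m : ℕ) < t then sa m else sb m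
      with hhyb
    have h0 : hyb 0 = sb := by funext m; simp [hhyb]
    have hNfull : hyb N = sa := by funext m; simp [hhyb, m.isLt]
    set f : ℕ → ℝ := fun t => expRewardHet β η r (hyb t) i j with hfd
    have hbnd0 : 0 ≤ θ / N * (4 * βmax * d) := by positivity
    have hstep : ∀ t ∈ Finset.range N, |f (t+1) - f t| ≤ θ / N * (4 * βmax * d) := by
      intro t ht
      rw [Finset.mem_range] at ht
      set mt : Fin N := ⟨t, ht⟩ with hmt
      have hagree : ∀ m', m' ≠ mt → hyb (t+1) m' = hyb t m' := by
        intro m' hm'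
        have hne : (m' : ℕ) ≠ t := fun hc => hm' (Fin.ext hc)
        simp only [hhyb]
        rcases Nat.lt_or_ge (m' : ℕ) t with h | h
        · rw [if_pos (Nat.lt_succ_of_lt h), if_pos h]
        · have h1 : ¬ (m' : ℕ) < t := not_lt.2 h
          have h2 : ¬ (m' : ℕ) < t + 1 := by omega
          rw [if_neg h2, if_neg h1]
      have e1 : hyb (t+1) mt = sa mt := by
        simp only [hhyb]
        rw [if_pos (by simp [hmt])]
      have e2 : hyb t mt = sb mt := by
        simp only [hhyb]
        rw [if_neg (by simp [hmt])]
      by_cases hmi : mt = i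
      · have heq : expRewardHet β η r (hyb (t+1)) i j = expRewardHet β η r (hyb t) i j :=
          expRewardHet_congr β η r (hyb (t+1)) (hyb t) i j
            (fun m hm => hagree m (by rw [hmi]; exact hm))
        simp only [hfd, heq, sub_self, abs_zero]
        exact hbnd0
      · have hstep' := step_bound hN hM β η hβ hη θ hθ r hr_lip i mt hmi j
          (hyb (t+1)) (hyb t) hagree d hd
          (by intro k; rw [e1, e2]; exact hdist mt k)
        refine le_trans hstep' ?_
        apply mul_le_mul_of_nonneg_left ?_ (by positivity)
        have := hβmaxle mt
        nlinarith
    calc |expRewardHet β η r sa i j - expRewardHet β η r sb i j|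
        = |f N - f 0| := by rw [hfd]; simp only [h0, hNfull]
      _ ≤ ∑ t ∈ Finset.range N, |f (t+1) - f t| := telescope_abs f N
      _ ≤ ∑ _t ∈ Finset.range N, θ / N * (4 * βmax * d) := Finset.sum_le_sum hstep
      _ = (N:ℝ) * (θ / N * (4 * βmax * d)) := by
          rw [Finset.sum_const, Finset.card_range, nsmul_eq_mul]
      _ = 4 * θ * βmax * d := by field_simp
  refine ⟨hpart1, fun hlt i j => ⟨4 * θ * βmax, ?_, hlt, fun sa sb => hpart1 i j sa sb⟩⟩
  have : 0 ≤ 4 * θ := by linarith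
  exact mul_nonneg this hβmaxpos.le
end
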